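/- Let A, B, C be an affinely independent triangle in the Euclidean plane whose circumcenter is the origin (‖A‖ = ‖B‖ = ‖C‖ = R, the circumradius). Let a = dist(B,C), b = dist(C,A), c = dist(A,B), let S be twice the area of the triangle, and set S_A = (b²+c²−a²)/2, S_B = (c²+a²−b²)/2, S_C = (a²+b²−c²)/2. Let u, v be real numbers with (3u+v)·S² ≠ 0, and let X be the point with barycentric weights f_A = u·S² + v·S_B·S_C, f_B = u·S² + v·S_C·S_A, f_C = u·S² + v·S_A·S_B, i.e., X = (f_A·A + f_B·B + f_C·C)/(f_A + f_B + f_C). Then X = λ·(A + B + C) where λ = (u+v)/(3u+v). In other words, X is the P_λ point of triangle ABC with λ = τ(u,v) = (u+v)/(3u+v). -/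

import Mathlib

/-!
With the circumcenter at the origin, `H = A + B + C` is the orthocenter: `H - A = B + C` is
orthogonal to `B - C` because `‖B‖ = ‖C‖`. Its barycentric weights are
`(S_B S_C : S_C S_A : S_A S_B)`, which sum to `S_A S_B + S_B S_C + S_C S_A = S²` (a Gram
determinant). So the weights `u S² + v S_B S_C, …` sum to `(3u + v) S²` and combine `A, B, C`
to `u S² H + v S² H = (u + v) S² H`.
-/

open RealInnerProductSpace

section Metric

variable {P : Type*} [MetricSpace P]

noncomputable def conwaySymbol (A B C : P) : ℝ :=
  (dist C A ^ 2 + dist A B ^ 2 - dist B C ^ 2) / 2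

theorem conwaySymbol_mul_cyclic_sum (A B C : P) :
    conwaySymbol A B C * conwaySymbol B C A + conwaySymbol B C A * conwaySymbol C A B
        + conwaySymbol C A B * conwaySymbol A B C =
      dist A B ^ 2 * dist C A ^ 2 - conwaySymbol A B C ^ 2 := by
  unfold conwaySymbol
  ring

end Metric

section InnerProductSpace

variable {E : Type*} [NormedAddCommGroup E] [InnerProductSpace ℝ E]

theorem conwaySymbol_eq_inner (A B C : E) : conwaySymbol A B C = ⟪B - A, C - A⟫ := by
  have h := norm_sub_sq_real (B - A) (C - A)
  rw [sub_sub_sub_cancel_right] at h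
  rw [conwaySymbol, dist_eq_norm, dist_eq_norm', dist_eq_norm, h]
  ring

theorem inner_conwaySymbol_smul_sum_sub_eq_zero {A B C : E} {R : ℝ}
    (hA : ‖A‖ = R) (hB : ‖B‖ = R) (hC : ‖C‖ = R) {D : E}
    (hD : D = B - A ∨ D = C - A) :
    ⟪(conwaySymbol B C A * conwaySymbol C A B) • A
        + (conwaySymbol C A B * conwaySymbol A B C) • B
        + (conwaySymbol A B C * conwaySymbol B C A) • C
        - (conwaySymbol A B C * conwaySymbol B C A + conwaySymbol B C A * conwaySymbol C A B
          + conwaySymbol C A B * conwaySymbol A B C) • (A + B + C), D⟫ = 0 := by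
  simp only [conwaySymbol_eq_inner]
  rcases hD with rfl | rfl <;>
  simp only [inner_sub_left, inner_add_left, inner_smul_left, inner_sub_right,
    real_inner_self_eq_norm_sq, hA, hB, hC, real_inner_comm A B, real_inner_comm A C,
    real_inner_comm B C, RCLike.conj_to_real] <;> ring

end InnerProductSpace

section Plane

theorem EuclideanSpace.cross_sq_eq_norm_sq_mul_norm_sq_sub_inner_sq
    (x y : EuclideanSpace ℝ (Fin 2)) :
    (x 0 * y 1 - x 1 * y 0) ^ 2 = ‖x‖ ^ 2 * ‖y‖ ^ 2 - ⟪x, y⟫ ^ 2 := by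
  simp only [EuclideanSpace.norm_sq_eq, EuclideanSpace.inner_eq_star_dotProduct, dotProduct,
    Fin.sum_univ_two, Real.norm_eq_abs, sq_abs, star_trivial]
  ring

theorem EuclideanSpace.eq_zero_of_inner_eq_zero_of_cross_ne_zero
    {w x y : EuclideanSpace ℝ (Fin 2)} (hxy : x 0 * y 1 - x 1 * y 0 ≠ 0)
    (hx : ⟪w, x⟫ = 0) (hy : ⟪w, y⟫ = 0) : w = 0 := by
  simp only [EuclideanSpace.inner_eq_star_dotProduct, dotProduct, Fin.sum_univ_two,
    star_trivial] at hx hy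
  ext i
  fin_cases i
  · exact (mul_eq_zero.mp (by linear_combination y 1 * hx - x 1 * hy :
      (x 0 * y 1 - x 1 * y 0) * w 0 = 0)).resolve_left hxy
  · exact (mul_eq_zero.mp (by linear_combination x 0 * hy - y 0 * hx :
      (x 0 * y 1 - x 1 * y 0) * w 1 = 0)).resolve_left hxy

theorem conwaySymbol_mul_cyclic_sum_eq_cross_sq (A B C : EuclideanSpace ℝ (Fin 2)) :
    conwaySymbol A B C * conwaySymbol B C A + conwaySymbol B C A * conwaySymbol C A B
        + conwaySymbol C A B * conwaySymbol A B C =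
      ((B 0 - A 0) * (C 1 - A 1) - (B 1 - A 1) * (C 0 - A 0)) ^ 2 := by
  rw [conwaySymbol_mul_cyclic_sum, conwaySymbol_eq_inner, dist_eq_norm', dist_eq_norm,
    ← EuclideanSpace.cross_sq_eq_norm_sq_mul_norm_sq_sub_inner_sq]
  simp only [PiLp.sub_apply]

theorem conwaySymbol_mul_smul_sum_eq {A B C : EuclideanSpace ℝ (Fin 2)} {R : ℝ}
    (hA : ‖A‖ = R) (hB : ‖B‖ = R) (hC : ‖C‖ = R)
    (hABC : (B 0 - A 0) * (C 1 - A 1) - (B 1 - A 1) * (C 0 - A 0) ≠ 0) :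
    (conwaySymbol B C A * conwaySymbol C A B) • A
        + (conwaySymbol C A B * conwaySymbol A B C) • B
        + (conwaySymbol A B C * conwaySymbol B C A) • C
      = (conwaySymbol A B C * conwaySymbol B C A + conwaySymbol B C A * conwaySymbol C A B
          + conwaySymbol C A B * conwaySymbol A B C) • (A + B + C) :=
  sub_eq_zero.mp <|
    EuclideanSpace.eq_zero_of_inner_eq_zero_of_cross_ne_zero (x := B - A) (y := C - A) hABC
      (inner_conwaySymbol_smul_sum_sub_eq_zero hA hB hC (.inl rfl))
      (inner_conwaySymbol_smul_sum_sub_eq_zero hA hB hC (.inr rfl))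

end Plane

theorem stmt_11_general (A B C : EuclideanSpace ℝ (Fin 2))
    (R : ℝ) (hA : ‖A‖ = R) (hB : ‖B‖ = R) (hC : ‖C‖ = R)
    (a b c S SA SB SC : ℝ)
    (hab : a = dist B C) (hbc : b = dist C A) (hca : c = dist A B)
    (hS : S = |(B 0 - A 0) * (C 1 - A 1) - (B 1 - A 1) * (C 0 - A 0)|)
    (hSA : SA = (b ^ 2 + c ^ 2 - a ^ 2) / 2)
    (hSB : SB = (c ^ 2 + a ^ 2 - b ^ 2) / 2)
    (hSC : SC = (a ^ 2 + b ^ 2 - c ^ 2) / 2)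
    (u v : ℝ) (huv : (3 * u + v) * S ^ 2 ≠ 0)
    (fA fB fC : ℝ)
    (hfA : fA = u * S ^ 2 + v * SB * SC)
    (hfB : fB = u * S ^ 2 + v * SC * SA)
    (hfC : fC = u * S ^ 2 + v * SA * SB)
    (X : EuclideanSpace ℝ (Fin 2))
    (hX : X = (fA + fB + fC)⁻¹ • (fA • A + fB • B + fC • C)) :
    X = ((u + v) / (3 * u + v)) • (A + B + C) := by
  have hSA' : SA = conwaySymbol A B C := by rw [hSA, conwaySymbol, hab, hbc, hca]
  have hSB' : SB = conwaySymbol B C A := by rw [hSB, conwaySymbol, hab, hbc, hca]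
  have hSC' : SC = conwaySymbol C A B := by rw [hSC, conwaySymbol, hab, hbc, hca]
  have hS2 : S ^ 2 = SA * SB + SB * SC + SC * SA := by
    rw [hS, sq_abs, hSA', hSB', hSC', conwaySymbol_mul_cyclic_sum_eq_cross_sq]
  have hcross : (B 0 - A 0) * (C 1 - A 1) - (B 1 - A 1) * (C 0 - A 0) ≠ 0 := by
    intro h
    exact huv (by rw [hS, h, abs_zero]; ring)
  have horthocenter :
      (SB * SC) • A + (SC * SA) • B + (SA * SB) • C = S ^ 2 • (A + B + C) := by
    rw [hS2, hSA', hSB', hSC']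
    exact conwaySymbol_mul_smul_sum_eq hA hB hC hcross
  have hsum : fA + fB + fC = (3 * u + v) * S ^ 2 := by
    rw [hfA, hfB, hfC, hS2]; ring
  have hcomb : fA • A + fB • B + fC • C = ((u + v) * S ^ 2) • (A + B + C) := by
    rw [hfA, hfB, hfC]
    linear_combination (norm := module) v • horthocenter
  rw [hX, hsum, hcomb, smul_smul, ← div_eq_inv_mul,
    mul_div_mul_right _ _ (right_ne_zero_of_mul huv)]

/-- Conversion of Shinagawa coefficients: With the setup of Kimberling's lemma
(triangle `A, B, C` with circumcenter at the origin, Conway symbols, constant Shinagawa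
coefficients `(u, v)` with `(3u+v)·S² ≠ 0`), the center `X` with barycentric weights
`(u·S² + v·S_B·S_C : u·S² + v·S_C·S_A : u·S² + v·S_A·S_B)` is the `P_λ` point of the triangle
with `λ = τ(u,v) = (u+v)/(3u+v)`, i.e. `X = ((u+v)/(3u+v)) • (A + B + C)`. -/
theorem stmt_11 (A B C : EuclideanSpace ℝ (Fin 2))
    (hindep : AffineIndependent ℝ ![A, B, C])
    (R : ℝ) (hA : ‖A‖ = R) (hB : ‖B‖ = R) (hC : ‖C‖ = R)
    (a b c S SA SB SC : ℝ)
    (hab : a = dist B C) (hbc : b = dist C A) (hca : c = dist A B)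
    (hS : S = |(B 0 - A 0) * (C 1 - A 1) - (B 1 - A 1) * (C 0 - A 0)|)
    (hSA : SA = (b ^ 2 + c ^ 2 - a ^ 2) / 2)
    (hSB : SB = (c ^ 2 + a ^ 2 - b ^ 2) / 2)
    (hSC : SC = (a ^ 2 + b ^ 2 - c ^ 2) / 2)
    (u v : ℝ) (huv : (3 * u + v) * S ^ 2 ≠ 0)
    (fA fB fC : ℝ)
    (hfA : fA = u * S ^ 2 + v * SB * SC)
    (hfB : fB = u * S ^ 2 + v * SC * SA)
    (hfC : fC = u * S ^ 2 + v * SA * SB)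
    (X : EuclideanSpace ℝ (Fin 2))
    (hX : X = (fA + fB + fC)⁻¹ • (fA • A + fB • B + fC • C)) :
    X = ((u + v) / (3 * u + v)) • (A + B + C) :=
  stmt_11_general A B C R hA hB hC a b c S SA SB SC hab hbc hca hS hSA hSB hSC u v huv fA fB fC hfA
    hfB hfC X hX
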